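/- arXiv:1607.03657 — 6 statements merged into one kernel-verified Lean document; each statement's English description precedes it below -/
import Mathlib

section
/- Let X be a Hausdorff topological space equipped with a bornology ℬ that is compatible with the topology, i.e. every bounded subset is contained in a bounded open subset and the closure of every bounded subset is bounded. Let C ⊆ X be a subset such that: (i) C with the subspace topology is a separable locally compact space, and (ii) a subset S ⊆ C is bounded in X if and only if S is relatively compact in C (the closure of S taken inside C is compact). Then C is a closed subset of X. -/
/-- Let `X` be a Hausdorff topological space with a compatible bornology `ℬ` (every bounded
set has a bounded open neighbourhood and bounded closure).  If `C ⊆ X` is such that `C`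
with the subspace topology is separable and locally compact, and a subset `S ⊆ C` is bounded
in `X` if and only if it is relatively compact in `C`, then `C` is closed in `X`. -/
theorem locallyCompactSubset_isClosed {X : Type*} [TopologicalSpace X] [T2Space X]
    (ℬ : Set (Set X))
    (hcov : ∀ x : X, ∃ B ∈ ℬ, x ∈ B)
    (hsub : ∀ ⦃B C : Set X⦄, B ∈ ℬ → C ⊆ B → C ∈ ℬ)
    (hun : ∀ ⦃B C : Set X⦄, B ∈ ℬ → C ∈ ℬ → B ∪ C ∈ ℬ)
    (hopen : ∀ B ∈ ℬ, ∃ O ∈ ℬ, IsOpen O ∧ B ⊆ O)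
    (hcl : ∀ B ∈ ℬ, closure B ∈ ℬ)
    (C : Set X)
    (hsep : TopologicalSpace.SeparableSpace C)
    (hlc : LocallyCompactSpace C)
    (hborn : ∀ S : Set X, S ⊆ C →
      (S ∈ ℬ ↔ IsCompact (closure ((fun c : C => (c : X)) ⁻¹' S)))) :
    IsClosed C := by
  rw [← closure_subset_iff_isClosed]
  intro x hx
  obtain ⟨B, hB, hxB⟩ := hcov x
  obtain ⟨O, hO, hOopen, hBO⟩ := hopen B hB
  have hS : O ∩ C ∈ ℬ := hsub hO Set.inter_subset_left
  have hK : IsCompact (closure ((fun c : C => (c : X)) ⁻¹' (O ∩ C))) :=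
    (hborn (O ∩ C) Set.inter_subset_right).mp hS
  have hKim : IsCompact ((fun c : C => (c : X)) ''
      closure ((fun c : C => (c : X)) ⁻¹' (O ∩ C))) :=
    hK.image continuous_subtype_val
  have hclosed : IsClosed ((fun c : C => (c : X)) ''
      closure ((fun c : C => (c : X)) ⁻¹' (O ∩ C))) := hKim.isClosed
  have hsub2 : O ∩ C ⊆ (fun c : C => (c : X)) ''
      closure ((fun c : C => (c : X)) ⁻¹' (O ∩ C)) := by
    rintro y ⟨hyO, hyC⟩
    exact ⟨⟨y, hyC⟩, subset_closure ⟨hyO, hyC⟩, rfl⟩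
  have hxcl : x ∈ closure (O ∩ C) := by
    rw [Set.inter_comm]
    exact mem_closure_iff_nhds.mpr fun t ht => by
      rcases mem_closure_iff_nhds.mp hx (t ∩ O)
        (Filter.inter_mem ht (hOopen.mem_nhds (hBO hxB))) with ⟨y, ⟨hyt, hyO⟩, hyC⟩
      exact ⟨y, hyt, hyC, hyO⟩
  have := (closure_minimal hsub2 hclosed) hxcl
  rcases this with ⟨c, _, rfl⟩
  exact c.2
end

section
/- Gluing of morphisms along a complementary pair (the core of the proof that the Grothendieck topology τ_χ on bornological coarse spaces is subcanonical): Let (X,𝒞,ℬ) and (X',𝒞',ℬ') be bornological coarse spaces, let (Y_i)_{i∈I} be a big family on X, and let Z ⊆ X be a subset such that Z ∪ Y_{i₀} = X for some i₀ ∈ I (a complementary pair). Let h : X → X' be a map of sets such that for every entourage U ∈ 𝒞 the sets (h×h)(U ∩ (Z×Z)) and (h×h)(U ∩ (Y_i×Y_i)) for all i ∈ I belong to 𝒞', and for every bounded B' ∈ ℬ' the sets h⁻¹(B') ∩ Z and h⁻¹(B') ∩ Y_i for all i ∈ I belong to ℬ. Then h is a morphism of bornological coarse spaces: (h×h)(U)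 ∈ 𝒞' for every U ∈ 𝒞 and h⁻¹(B') ∈ ℬ for every B' ∈ ℬ'. -/
/-- The `U`-thickening `U[B] := {x : ∃ b ∈ B, (x, b) ∈ U}` of a subset `B` by an
entourage `U`. -/
def thick {X : Type*} (U : Set (X × X)) (B : Set X) : Set X :=
  {x | ∃ b ∈ B, (x, b) ∈ U}

/-- Composition of relations: `U ∘ V`. -/
def relComp {X : Type*} (U V : Set (X × X)) : Set (X × X) :=
  {p | ∃ z, (p.1, z) ∈ U ∧ (z, p.2) ∈ V}

/-- `iterComp U n` is the `(n+1)`-fold composition `U ∘ U ∘ ⋯ ∘ U`. -/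
def iterComp {X : Type*} (U : Set (X × X)) : ℕ → Set (X × X)
  | 0 => U
  | n + 1 => relComp (iterComp U n) U

/-- A bornological coarse structure on a set `X`: a coarse structure (a collection of
entourages containing the diagonal and closed under subsets, finite unions, inverses and
compositions) together with a compatible bornology (a collection of bounded sets covering
`X` and closed under subsets and finite unions, such that controlled thickenings of bounded
sets are bounded). -/
structure BornCoarse (X : Type*) where
  /-- the entourages -/
  entourages : Set (Set (X × X))
  diag_mem : {p : X × X | p.1 = p.2} ∈ entourages
  subset_mem : ∀ ⦃U V : Set (X × X)⦄, U ∈ entourages → V ⊆ U → V ∈ entourages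
  union_mem : ∀ ⦃U V : Set (X × X)⦄, U ∈ entourages → V ∈ entourages → U ∪ V ∈ entourages
  inv_mem : ∀ ⦃U : Set (X × X)⦄, U ∈ entourages → {p : X × X | (p.2, p.1) ∈ U} ∈ entourages
  comp_mem : ∀ ⦃U V : Set (X × X)⦄, U ∈ entourages → V ∈ entourages →
    relComp U V ∈ entourages
  /-- the bounded subsets -/
  bounded : Set (Set X)
  covers : ∀ x : X, ∃ B ∈ bounded, x ∈ B
  empty_mem : (∅ : Set X) ∈ bounded
  bounded_subset : ∀ ⦃B C : Set X⦄, B ∈ bounded → C ⊆ B → C ∈ bounded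
  bounded_union : ∀ ⦃B C : Set X⦄, B ∈ bounded → C ∈ bounded → B ∪ C ∈ bounded
  compat : ∀ ⦃U : Set (X × X)⦄ ⦃B : Set X⦄, U ∈ entourages → B ∈ bounded →
    thick U B ∈ bounded

/-- A map between bornological coarse spaces is controlled if it maps entourages to
entourages. -/
def IsControlled {X X' : Type*} (S : BornCoarse X) (S' : BornCoarse X') (f : X → X') :
    Prop :=
  ∀ U ∈ S.entourages, (fun p : X × X => (f p.1, f p.2)) '' U ∈ S'.entourages

/-- A map between bornological coarse spaces is proper if preimages of bounded sets are
bounded. -/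
def IsProper {X X' : Type*} (S : BornCoarse X) (S' : BornCoarse X') (f : X → X') : Prop :=
  ∀ B ∈ S'.bounded, f ⁻¹' B ∈ S.bounded

/-- A morphism of bornological coarse spaces is a controlled and proper map. -/
def IsMorphism {X X' : Type*} (S : BornCoarse X) (S' : BornCoarse X') (f : X → X') : Prop :=
  IsControlled S S' f ∧ IsProper S S' f

/-!
A pair of `U` with one end in `Y i₀` has both ends in the thickening of `Y i₀` by
`U ∪ U⁻¹ ∪ Δ`, which lies in some `Y j` because the family is big. Since `Z ∪ Y i₀ = X`, every
entourage is therefore covered by its parts over `Z × Z` and over `Y j × Y j`, and every subset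
of `X` by its parts in `Z` and in `Y i₀`.
-/

open Set

section Thickening

variable {X : Type*}

theorem thick_mono {U V : Set (X × X)} (hUV : U ⊆ V) (B : Set X) : thick U B ⊆ thick V B :=
  fun _ ⟨b, hb, hxb⟩ => ⟨b, hb, hUV hxb⟩

theorem subset_thick_of_diag_subset {U : Set (X × X)} (hU : {p : X × X | p.1 = p.2} ⊆ U)
    (B : Set X) : B ⊆ thick U B :=
  fun x hx => ⟨x, hx, hU rfl⟩

theorem subset_inter_prod_union_inter_prod {U : Set (X × X)} {Y Z W : Set X}
    (hcompl : Z ∪ Y = univ) (hYW : Y ⊆ W) (hUW : thick U Y ⊆ W)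
    (hUinvW : thick {p | (p.2, p.1) ∈ U} Y ⊆ W) :
    U ⊆ U ∩ Z ×ˢ Z ∪ U ∩ W ×ˢ W := by
  have hcover : ∀ x, x ∈ Z ∨ x ∈ Y := fun x => (hcompl ▸ mem_univ x : x ∈ Z ∪ Y)
  rintro ⟨x, y⟩ hxy
  rcases hcover x with hx | hx
  · rcases hcover y with hy | hy
    · exact Or.inl ⟨hxy, hx, hy⟩
    · exact Or.inr ⟨hxy, hUW ⟨y, hy, hxy⟩, hYW hy⟩
  · exact Or.inr ⟨hxy, hYW hx, hUinvW ⟨x, hx, hxy⟩⟩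

end Thickening

namespace BornCoarse

variable {X : Type*} (S : BornCoarse X)

theorem union_inv_union_diag_mem {U : Set (X × X)} (hU : U ∈ S.entourages) :
    U ∪ {p | (p.2, p.1) ∈ U} ∪ {p | p.1 = p.2} ∈ S.entourages :=
  S.union_mem (S.union_mem hU (S.inv_mem hU)) S.diag_mem

theorem exists_subset_inter_prod_union_inter_prod {ι : Type*} {Y : ι → Set X}
    (hbig : ∀ i, ∀ U ∈ S.entourages, ∃ j, thick U (Y i) ⊆ Y j)
    {Z : Set X} {i₀ : ι} (hcompl : Z ∪ Y i₀ = univ) {U : Set (X × X)}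
    (hU : U ∈ S.entourages) :
    ∃ j, U ⊆ U ∩ Z ×ˢ Z ∪ U ∩ Y j ×ˢ Y j := by
  obtain ⟨j, hj⟩ := hbig i₀ _ (S.union_inv_union_diag_mem hU)
  refine ⟨j, subset_inter_prod_union_inter_prod hcompl ?_ ?_ ?_⟩
  · exact (subset_thick_of_diag_subset subset_union_right _).trans hj
  · exact (thick_mono (subset_union_left.trans subset_union_left) _).trans hj
  · exact (thick_mono (subset_union_right.trans subset_union_left) _).trans hj

theorem bounded_of_inter_mem_of_union_eq_univ {A Z Y : Set X} (hcompl : Z ∪ Y = univ)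
    (hZ : A ∩ Z ∈ S.bounded) (hY : A ∩ Y ∈ S.bounded) : A ∈ S.bounded := by
  rw [← inter_univ A, ← hcompl, inter_union_distrib_left]
  exact S.bounded_union hZ hY

end BornCoarse

theorem glue_morphism_along_complementary_pair_general {X X' : Type*}
    (S : BornCoarse X) (S' : BornCoarse X')
    {I : Type*}
    (Y : I → Set X)
    (hbig : ∀ i : I, ∀ U ∈ S.entourages, ∃ j : I, thick U (Y i) ⊆ Y j)
    (Z : Set X) (i₀ : I) (hcompl : Z ∪ Y i₀ = Set.univ)
    (h : X → X')
    (hcZ : ∀ U ∈ S.entourages,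
      (fun p : X × X => (h p.1, h p.2)) '' (U ∩ Z ×ˢ Z) ∈ S'.entourages)
    (hcY : ∀ U ∈ S.entourages, ∀ i : I,
      (fun p : X × X => (h p.1, h p.2)) '' (U ∩ Y i ×ˢ Y i) ∈ S'.entourages)
    (hpZ : ∀ B' ∈ S'.bounded, h ⁻¹' B' ∩ Z ∈ S.bounded)
    (hpY : ∀ B' ∈ S'.bounded, ∀ i : I, h ⁻¹' B' ∩ Y i ∈ S.bounded) :
    IsMorphism S S' h := by
  refine ⟨fun U hU => ?_, fun B' hB' => ?_⟩
  · obtain ⟨j, hUj⟩ := S.exists_subset_inter_prod_union_inter_prod hbig hcompl hU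
    refine S'.subset_mem ?_ (image_mono hUj)
    rw [image_union]
    exact S'.union_mem (hcZ U hU) (hcY U hU j)
  · exact S.bounded_of_inter_mem_of_union_eq_univ hcompl (hpZ B' hB') (hpY B' hB' i₀)

/-- Gluing of morphisms along a complementary pair: if `(Y i)` is a big family on `X`,
`Z ∪ Y i₀ = X`, and the set map `h : X → X'` is controlled and proper when restricted to
`Z` and to each member `Y i` (in the stated sense), then `h` is a morphism of bornological
coarse spaces. -/
theorem glue_morphism_along_complementary_pair {X X' : Type*}
    (S : BornCoarse X) (S' : BornCoarse X')
    {I : Type*} [PartialOrder I] [Nonempty I] [IsDirected I (· ≤ ·)]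
    (Y : I → Set X) (hmono : Monotone Y)
    (hbig : ∀ i : I, ∀ U ∈ S.entourages, ∃ j : I, thick U (Y i) ⊆ Y j)
    (Z : Set X) (i₀ : I) (hcompl : Z ∪ Y i₀ = Set.univ)
    (h : X → X')
    (hcZ : ∀ U ∈ S.entourages,
      (fun p : X × X => (h p.1, h p.2)) '' (U ∩ Z ×ˢ Z) ∈ S'.entourages)
    (hcY : ∀ U ∈ S.entourages, ∀ i : I,
      (fun p : X × X => (h p.1, h p.2)) '' (U ∩ Y i ×ˢ Y i) ∈ S'.entourages)
    (hpZ : ∀ B' ∈ S'.bounded, h ⁻¹' B' ∩ Z ∈ S.bounded)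
    (hpY : ∀ B' ∈ S'.bounded, ∀ i : I, h ⁻¹' B' ∩ Y i ∈ S.bounded) :
    IsMorphism S S' h :=
  glue_morphism_along_complementary_pair_general S S' Y hbig Z i₀ hcompl h hcZ hcY hpZ hpY
end

section
/- Openness of spaces of controlled probability measures supported on a big family (established in the proof that the coarsification functor Q is excisive): Let X be a set with the discrete topology, let C₀(X) denote the real-valued continuous functions on X vanishing at infinity with the supremum norm, and let U ⊆ X × X. For S ⊆ X let P_U(S) denote the set of continuous linear functionals μ on C₀(X) of the form μ(f) = ∑_{x∈X} p(x) f(x) for some p : X → [0,∞) with ∑_{x∈X} p(x) = 1, supp(p) ⊆ S and supp(p) × supp(p) ⊆ U. Let Y ⊆ Y' ⊆ X satisfy U[Y] ⊆ Y'. Then there exists a weak-*-open subset O of the continuous dual of C₀(X) such that P_U(Y) ⊆ O and O ∩ P_U(X) ⊆ P_U(Y'); in other words, P_U(Y') contains an open neighbourhood of P_U(Y) in the subspace P_U(X) of the weak-* topology. -/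
open scoped ZeroAtInfty

/-- `P_U(S)`: the set of continuous linear functionals on `C₀(X, ℝ)` given by probability
measures `p` whose support is contained in `S` and is `U`-bounded, regarded inside the
continuous dual with its weak-* topology. -/
def probMeasOn (X : Type*) [TopologicalSpace X] [DiscreteTopology X]
    (U : Set (X × X)) (S : Set X) : Set (WeakDual ℝ C₀(X, ℝ)) :=
  {μ | ∃ p : X → ℝ, (∀ x : X, 0 ≤ p x) ∧ HasSum p 1 ∧
    Function.support p ⊆ S ∧ (Function.support p) ×ˢ (Function.support p) ⊆ U ∧
    ∀ f : C₀(X, ℝ), μ f = ∑' x : X, p x * f x}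

/-! Evaluation at the indicator `δ_y` of a point is weak-*-continuous and reads off the weight
`p y`, so `O := ⋃ y ∈ Y, {μ | 0 < μ δ_y}` is open and contains `P_U(Y)`. A `U`-bounded `p`
with positive weight at some `y ∈ Y` has its whole support in `U[Y] ⊆ Y'`. -/

theorem subset_thick_of_prod_subset {X : Type*} {U : Set (X × X)} {s B : Set X} {y : X}
    (hs : s ×ˢ s ⊆ U) (hys : y ∈ s) (hyB : y ∈ B) : s ⊆ thick U B :=
  fun _ hx => ⟨y, hyB, hs ⟨hx, hys⟩⟩

theorem HasSum.support_nonempty {ι α : Type*} [AddCommMonoid α] [TopologicalSpace α] [T2Space α]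
    {p : ι → α} {a : α} (hp : HasSum p a) (ha : a ≠ 0) : (Function.support p).Nonempty :=
  Function.support_nonempty_iff.2 fun h => ha <| hp.unique (h ▸ hasSum_zero)

namespace ZeroAtInftyContinuousMap

variable {X β : Type*} [TopologicalSpace X] [DiscreteTopology X] [DecidableEq X]
  [TopologicalSpace β] [Zero β]

def single (y : X) (b : β) : C₀(X, β) where
  toFun := Pi.single y b
  continuous_toFun := continuous_of_discreteTopology
  zero_at_infty' :=
    (HasCompactSupport.of_support_subset_isCompact isCompact_singleton
      Pi.support_single_subset).is_zero_at_infty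

end ZeroAtInftyContinuousMap

theorem tsum_mul_single_one {X : Type*} [DecidableEq X] (p : X → ℝ) (y : X) :
    ∑' x, p x * (Pi.single y 1 : X → ℝ) x = p y := by
  simp only [Pi.single_apply, mul_ite, mul_one, mul_zero]
  exact tsum_ite_eq y p

theorem apply_single_eq_of_forall_eq_tsum {X : Type*} [TopologicalSpace X] [DiscreteTopology X]
    [DecidableEq X] {μ : WeakDual ℝ C₀(X, ℝ)} {p : X → ℝ}
    (hμ : ∀ f : C₀(X, ℝ), μ f = ∑' x, p x * f x) (y : X) :
    μ (ZeroAtInftyContinuousMap.single y 1) = p y :=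
  (hμ _).trans (tsum_mul_single_one p y)

theorem probMeasOn_open_neighbourhood_general {X : Type*} [TopologicalSpace X] [DiscreteTopology X]
    (U : Set (X × X)) (Y Y' : Set X) (hUY : thick U Y ⊆ Y') :
    ∃ O : Set (WeakDual ℝ C₀(X, ℝ)), IsOpen O ∧ probMeasOn X U Y ⊆ O ∧
      O ∩ probMeasOn X U Set.univ ⊆ probMeasOn X U Y' := by
  classical
  let δ (y : X) : C₀(X, ℝ) := ZeroAtInftyContinuousMap.single y 1
  refine ⟨⋃ y ∈ Y, {μ | 0 < μ (δ y)}, ?_, ?_, ?_⟩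
  · exact isOpen_biUnion fun y _ => isOpen_lt continuous_const (WeakDual.eval_continuous _)
  · rintro μ ⟨p, hp0, hp1, hpY, -, hμ⟩
    obtain ⟨y, hy⟩ := hp1.support_nonempty one_ne_zero
    refine Set.mem_biUnion (hpY hy) ?_
    rw [Set.mem_ofPred_eq, apply_single_eq_of_forall_eq_tsum hμ]
    exact (hp0 y).lt_of_ne' hy
  · rintro μ ⟨hμO, p, hp0, hp1, -, hpU, hμ⟩
    obtain ⟨y, hyY, hμy⟩ := Set.mem_iUnion₂.1 hμO
    rw [Set.mem_ofPred_eq, apply_single_eq_of_forall_eq_tsum hμ] at hμy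
    exact ⟨p, hp0, hp1, (subset_thick_of_prod_subset hpU hμy.ne' hyY).trans hUY, hpU, hμ⟩

/-- If `Y ⊆ Y' ⊆ X` and `U[Y] ⊆ Y'`, then `P_U(Y')` contains a weak-*-open neighbourhood of
`P_U(Y)` inside the subspace `P_U(X)` of the dual of `C₀(X, ℝ)`. -/
theorem probMeasOn_open_neighbourhood {X : Type*} [TopologicalSpace X] [DiscreteTopology X]
    (U : Set (X × X)) (Y Y' : Set X) (hYY' : Y ⊆ Y') (hUY : thick U Y ⊆ Y') :
    ∃ O : Set (WeakDual ℝ C₀(X, ℝ)), IsOpen O ∧ probMeasOn X U Y ⊆ O ∧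
      O ∩ probMeasOn X U Set.univ ⊆ probMeasOn X U Y' :=
  probMeasOn_open_neighbourhood_general U Y Y' hUY
end

section
/- Estimates for the rescaling functions used in the proof of flasqueness of hybrid spaces: For a real number S ≥ 3 define r_S : [0,∞) → ℝ by r_S(t) = log S − t/S for 0 ≤ t ≤ S/log S; r_S(t) = log S − 1/log S − (t − S/log S) for S/log S ≤ t ≤ log S − 1/log S + S/log S; and r_S(t) = 0 for t ≥ log S − 1/log S + S/log S (these formulas are consistent and define a continuous function since log S ≥ 1). Then: (a) every r_S is Lipschitz with constant 1 and takes values in [0, log S]; and (b) there exists a constant C > 0 such that |r_S(t) − r_{S+1}(t)| ≤ C / log S for all real S ≥ 3 and all t ≥ 0. -/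
/-!
For `S ≥ e`, `r_S = min ((log S - t/S)⁺, (c_S - t)⁺)` with `c_S = log S - 1/log S + S/log S`:
the two affine pieces cross at `S / log S`, where the value `log S - 1/log S` is nonnegative.
Being a lattice combination of maps of slopes `-1/S` and `-1`, `r_S` is 1-Lipschitz.

Comparing `r_S` and `r_{S+1}` piece by piece: the endpoints `c_S` move by at most `3/log S`.
The first pieces differ by `log (S+1) - log S + t/(S(S+1))`, which only matters while
`t ≤ (S+1) log (S+1)`; there it is `O(log S / S) = O(1/log S)` because `log² S ≤ 4S`.
-/

/-- The rescaling function `r_S` used in the proof of flasqueness of hybrid spaces. -/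
noncomputable def rS (S : ℝ) (t : ℝ) : ℝ :=
  if t ≤ S / Real.log S then Real.log S - t / S
  else if t ≤ Real.log S - 1 / Real.log S + S / Real.log S then
    Real.log S - 1 / Real.log S - (t - S / Real.log S)
  else 0

open Real

lemma log_sq_le_four_mul {x : ℝ} (hx : 1 ≤ x) : log x ^ 2 ≤ 4 * x := by
  have h := log_le_sub_one_of_pos (sqrt_pos.2 (by linarith) : 0 < √x)
  rw [log_sqrt (by linarith)] at h
  nlinarith [log_nonneg hx, sqrt_nonneg x, sq_sqrt (by linarith : 0 ≤ x)]

lemma one_le_log_of_exp_one_le {x : ℝ} (hx : exp 1 ≤ x) : 1 ≤ log x := by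
  rwa [le_log_iff_exp_le ((exp_pos 1).trans_le hx)]

lemma log_add_one_sub_log_le {x : ℝ} (hx : 0 < x) : log (x + 1) - log x ≤ 1 / x := by
  have h := log_le_sub_one_of_pos (by positivity : 0 < (x + 1) / x)
  rw [log_div (by linarith) hx.ne'] at h
  calc log (x + 1) - log x ≤ (x + 1) / x - 1 := h
    _ = 1 / x := by field_simp; ring

/-- `rS S` vanishes from this point on. -/
noncomputable def rSZero (S : ℝ) : ℝ := log S - 1 / log S + S / log S

section
variable {S : ℝ}

lemma rS_eq_min_max (hS : exp 1 ≤ S) (t : ℝ) :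
    rS S t = min (max 0 (log S - t / S)) (max 0 (rSZero S - t)) := by
  have hS0 : 0 < S := (exp_pos 1).trans_le hS
  have hl := one_le_log_of_exp_one_le hS
  have hS1 : 1 < S := by linarith [add_one_le_exp 1]
  unfold rS rSZero
  set l := log S
  have hl0 : 0 < l := by linarith
  have hgap : l - 1 / l + S / l - t - (l - t / S) = (S / l - t) * (1 - 1 / S) := by
    field_simp; ring
  have hfirst : l - t / S = (l - 1 / l) + (S / l - t) / S := by field_simp; ring
  have h1S : 0 < 1 - 1 / S := by rw [sub_pos, div_lt_one hS0]; exact hS1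
  have hl1 : 0 ≤ l - 1 / l := by rw [sub_nonneg, div_le_iff₀ hl0]; nlinarith
  split_ifs with h1 h2
  · have hf : 0 ≤ l - t / S := by
      rw [hfirst]; have : 0 ≤ (S / l - t) / S := div_nonneg (by linarith) hS0.le
      linarith
    have hfg : l - t / S ≤ l - 1 / l + S / l - t := by nlinarith
    rw [max_eq_right hf, max_eq_right (hf.trans hfg), min_eq_left hfg]
  · have hg : 0 ≤ l - 1 / l + S / l - t := by linarith
    have hgf : l - 1 / l + S / l - t ≤ l - t / S := by nlinarith
    rw [max_eq_right hg, max_eq_right (hg.trans hgf), min_eq_right hgf]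
    ring
  · have hg : l - 1 / l + S / l - t ≤ 0 := by linarith
    rw [max_eq_left hg, min_eq_right (le_max_left 0 _)]

lemma lipschitzWith_rS (hS : exp 1 ≤ S) : LipschitzWith 1 (rS S) := by
  have hS1 : 1 ≤ S := by linarith [add_one_le_exp 1]
  have hf : LipschitzWith 1 fun t : ℝ => log S - t / S := .of_dist_le_mul fun x y => by
    rw [dist_eq, dist_eq, NNReal.coe_one, one_mul,
      show log S - x / S - (log S - y / S) = (y - x) / S by ring, abs_div,
      abs_of_pos (by linarith : 0 < S), abs_sub_comm]
    exact div_le_self (abs_nonneg _) hS1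
  have hg : LipschitzWith 1 fun t : ℝ => rSZero S - t :=
    (IsometryEquiv.subLeft _).isometry.lipschitz
  simpa [← funext (rS_eq_min_max hS)] using (hf.const_max 0).min (hg.const_max 0)

lemma rS_mem_Icc (hS : exp 1 ≤ S) {t : ℝ} (ht : 0 ≤ t) : rS S t ∈ Set.Icc 0 (log S) := by
  have hS0 : 0 < S := (exp_pos 1).trans_le hS
  have hl := one_le_log_of_exp_one_le hS
  rw [rS_eq_min_max hS]
  refine ⟨le_min (le_max_left _ _) (le_max_left _ _), min_le_of_left_le (max_le ?_ ?_)⟩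
  · linarith
  · linarith [div_nonneg ht hS0.le]

lemma abs_rSZero_sub_rSZero_add_one_le (hS : exp 1 ≤ S) :
    |rSZero S - rSZero (S + 1)| ≤ 3 / log S := by
  have hS0 : 0 < S := (exp_pos 1).trans_le hS
  have hl := one_le_log_of_exp_one_le hS
  have hlS : log S ≤ S := log_le_self hS0.le
  have hll' : log S ≤ log (S + 1) := log_le_log hS0 (by linarith)
  have hd := log_add_one_sub_log_le hS0
  unfold rSZero
  set l := log S
  set l' := log (S + 1)
  have hl0 : 0 < l := by linarith
  have hinv : 1 / l' ≤ 1 / l := one_div_le_one_div_of_le hl0 hll'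
  have hd' : l' - l ≤ 1 / l := hd.trans (one_div_le_one_div_of_le hl0 hlS)
  have hfrac_lo : S / l ≤ (S + 1) / l' := by
    rw [div_le_div_iff₀ hl0 (by linarith)]
    nlinarith [mul_le_mul_of_nonneg_left hd hS0.le, mul_one_div_cancel hS0.ne']
  have hfrac_hi : (S + 1) / l' ≤ S / l + 1 / l := by
    rw [← add_div]; exact div_le_div_of_nonneg_left (by linarith) hl0 hll'
  have h3 : 3 / l = 1 / l + 1 / l + 1 / l := by ring
  rw [abs_sub_comm, abs_le]
  constructor <;> nlinarith [one_div_pos.2 hl0, one_div_pos.2 (hl0.trans_le hll')]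

lemma abs_max_zero_log_sub_div_sub_le (hS : exp 1 ≤ S) {t : ℝ} (ht : 0 ≤ t) :
    |max 0 (log S - t / S) - max 0 (log (S + 1) - t / (S + 1))| ≤ 9 / log S := by
  have hS0 : 0 < S := (exp_pos 1).trans_le hS
  have hl := one_le_log_of_exp_one_le hS
  have hlS : log S ≤ S := log_le_self hS0.le
  have hsq := log_sq_le_four_mul (show 1 ≤ S by linarith)
  have hll' : log S ≤ log (S + 1) := log_le_log hS0 (by linarith)
  have hd := log_add_one_sub_log_le hS0
  set l := log S
  set l' := log (S + 1)
  have hl0 : 0 < l := by linarith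
  have hmono : l - t / S ≤ l' - t / (S + 1) := by
    have := div_le_div_of_nonneg_left ht hS0 (by linarith : S ≤ S + 1)
    linarith
  rcases le_or_gt (l' - t / (S + 1)) 0 with hneg | hpos
  · rw [max_eq_left hneg, max_eq_left (hmono.trans hneg), sub_self, abs_zero]
    positivity
  have ht' : t / (S * (S + 1)) < l' / S := by
    rw [div_lt_div_iff₀ (by positivity) hS0]
    have := (div_lt_iff₀ (by linarith : 0 < S + 1)).1 (by linarith : t / (S + 1) < l')
    nlinarith
  calc |max 0 (l - t / S) - max 0 (l' - t / (S + 1))|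
      ≤ (l' - t / (S + 1)) - (l - t / S) := by
        refine (abs_max_sub_max_le_max 0 _ 0 _).trans ?_
        rw [sub_self, abs_zero, max_eq_right (abs_nonneg _), abs_sub_comm,
          abs_of_nonneg (sub_nonneg.2 hmono)]
    _ = (l' - l) + t / (S * (S + 1)) := by field_simp; ring
    _ ≤ 1 / S + (l + 1) / S := by
        have : l' / S ≤ (l + 1) / S := by
          gcongr; linarith [one_div_le_one_div_of_le one_pos (by linarith : 1 ≤ S)]
        linarith
    _ ≤ 1 / l + 8 / l := by
        gcongr ?_ + ?_
        · exact one_div_le_one_div_of_le hl0 hlS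
        · rw [div_le_div_iff₀ hS0 hl0]; nlinarith
    _ = 9 / l := by ring

lemma abs_rS_sub_rS_add_one_le (hS : exp 1 ≤ S) {t : ℝ} (ht : 0 ≤ t) :
    |rS S t - rS (S + 1) t| ≤ 9 / log S := by
  rw [rS_eq_min_max hS, rS_eq_min_max (hS.trans (by linarith))]
  refine (abs_min_sub_min_le_max _ _ _ _).trans
    (max_le (abs_max_zero_log_sub_div_sub_le hS ht) ?_)
  refine (abs_max_sub_max_le_max 0 _ 0 _).trans ?_
  rw [sub_self, abs_zero, max_eq_right (abs_nonneg _), sub_sub_sub_cancel_right]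
  have hl : 0 < log S := by linarith [one_le_log_of_exp_one_le hS]
  exact (abs_rSZero_sub_rSZero_add_one_le hS).trans (by gcongr; norm_num)

end

/-- (a) each `r_S` (for `S ≥ 3`) is Lipschitz with constant `1` on `[0, ∞)` and takes
values in `[0, log S]` there; (b) there is a constant `C > 0` with
`|r_S t - r_{S+1} t| ≤ C / log S` for all real `S ≥ 3` and all `t ≥ 0`. -/
theorem rS_lipschitz_bounds :
    (∀ S : ℝ, 3 ≤ S →
      LipschitzOnWith 1 (rS S) (Set.Ici 0) ∧
      ∀ t : ℝ, 0 ≤ t → rS S t ∈ Set.Icc 0 (Real.log S)) ∧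
    ∃ C : ℝ, 0 < C ∧ ∀ S : ℝ, 3 ≤ S → ∀ t : ℝ, 0 ≤ t →
      |rS S t - rS (S + 1) t| ≤ C / Real.log S := by
  have hexp : ∀ S : ℝ, 3 ≤ S → exp 1 ≤ S := fun S hS =>
    (exp_one_lt_d9.trans_le (by norm_num)).le.trans hS
  exact ⟨fun S hS => ⟨(lipschitzWith_rS (hexp S hS)).lipschitzOnWith,
      fun t ht => rS_mem_Icc (hexp S hS) ht⟩,
    9, by norm_num, fun S hS t ht => abs_rS_sub_rS_add_one_le (hexp S hS) ht⟩
end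

section
/- Ideal property of operators supported near a big family in the quasi-local Roe algebra: Let X be a bornological coarse space, (H,φ) an X-controlled Hilbert space, and (Y_i)_{i∈I} a big family on X. Let D ⊆ B(H) be the norm closure of the union over i ∈ I of the sets {T ∈ B(H) : φ(χ_{Y_i}) T φ(χ_{Y_i}) = T}. If Q ∈ B(H) is quasi-local and A ∈ D, then Q A ∈ D and A Q ∈ D. -/
noncomputable section

/-- The characteristic function of `B ⊆ X` as a bounded (continuous) function on the
discrete space `X`. -/
def chi {X : Type*} [TopologicalSpace X] [DiscreteTopology X] (B : Set X) :
    BoundedContinuousFunction X ℂ :=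
  BoundedContinuousFunction.ofNormedAddCommGroup (B.indicator fun _ => (1 : ℂ))
    continuous_of_discreteTopology 1 fun x => by
      by_cases hx : x ∈ B <;> simp [Set.indicator_apply, hx]

/-- A unital `*`-homomorphism from the `C*`-algebra `C(X)` of bounded functions on the
discrete space `X` into the bounded operators on the Hilbert space `H`. -/
abbrev CtrlRep (X : Type*) [TopologicalSpace X] [DiscreteTopology X] (H : Type*)
    [NormedAddCommGroup H] [InnerProductSpace ℂ H] [CompleteSpace H] :=
  BoundedContinuousFunction X ℂ →⋆ₐ[ℂ] (H →L[ℂ] H)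

section

variable {X : Type*} [TopologicalSpace X] [DiscreteTopology X]
variable {H : Type*} [NormedAddCommGroup H] [InnerProductSpace ℂ H] [CompleteSpace H]
variable {H' : Type*} [NormedAddCommGroup H'] [InnerProductSpace ℂ H'] [CompleteSpace H']

/-- `H(B) = φ(χ_B)H`, the subspace of vectors supported on `B`. -/
def Hsub (φ : CtrlRep X H) (B : Set X) : Set H :=
  Set.range ⇑(φ (chi B))

/-- `(H, φ)` is an `X`-controlled Hilbert space: `H(B)` is separable for every bounded
subset `B`. -/
def IsControlledHilbert (S : BornCoarse X) (φ : CtrlRep X H) : Prop :=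
  ∀ B ∈ S.bounded, TopologicalSpace.IsSeparable (Hsub φ B)

/-- A bounded operator has controlled propagation if there is an entourage `U` with
`A(H(B)) ⊆ H'(U[B])` for every bounded `B`. -/
def HasCtrlProp (S : BornCoarse X) (φ : CtrlRep X H) (φ' : CtrlRep X H')
    (A : H →L[ℂ] H') : Prop :=
  ∃ U ∈ S.entourages, ∀ B ∈ S.bounded, ⇑A '' Hsub φ B ⊆ Hsub φ' (thick U B)

/-- A bounded operator is quasi-local if there is an entourage `U` such that for every
`ε > 0` there is `n` with `‖φ'(χ_{B'}) A φ(χ_B)‖ ≤ ε` for all `Uⁿ`-separated `B, B'`. -/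
def IsQuasiLocal (S : BornCoarse X) (φ : CtrlRep X H) (φ' : CtrlRep X H')
    (A : H →L[ℂ] H') : Prop :=
  ∃ U ∈ S.entourages, ∀ ε : ℝ, 0 < ε → ∃ n : ℕ, ∀ B B' : Set X,
    thick (iterComp U n) B ∩ thick (iterComp U n) B' = ∅ →
      ‖φ' (chi B') ∘L A ∘L φ (chi B)‖ ≤ ε

/-- A bounded operator is locally compact if `φ(χ_B)A` and `Aφ(χ_B)` are compact for every
bounded `B`. -/
def IsLocallyCompactOp (S : BornCoarse X) (φ : CtrlRep X H) (A : H →L[ℂ] H) : Prop :=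
  ∀ B ∈ S.bounded,
    IsCompactOperator ⇑(φ (chi B) ∘L A) ∧ IsCompactOperator ⇑(A ∘L φ (chi B))

/-- A controlled Hilbert space is locally finite if `H(B)` is finite-dimensional for every
bounded `B`. -/
def IsLocallyFiniteRep (S : BornCoarse X) (φ : CtrlRep X H) : Prop :=
  ∀ B ∈ S.bounded, FiniteDimensional ℂ ↥(LinearMap.range (φ (chi B) : H →ₗ[ℂ] H))

/-- A controlled Hilbert space is ample if there is an entourage `U` such that `H(U[x])` is
infinite-dimensional for every point `x`. -/
def IsAmple (S : BornCoarse X) (φ : CtrlRep X H) : Prop :=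
  ∃ U ∈ S.entourages, ∀ x : X,
    ¬FiniteDimensional ℂ ↥(LinearMap.range (φ (chi (thick U {x})) : H →ₗ[ℂ] H))

/-- A closed subspace `K ⊆ H` is a locally finite subspace if it carries an `X`-control
making it a locally finite `X`-controlled Hilbert space such that the inclusion `K → H`
has controlled propagation. -/
def IsLocFinSubspace (S : BornCoarse X) (φ : CtrlRep X H) (K : Submodule ℂ H) : Prop :=
  ∃ hK : IsClosed (K : Set H),
    haveI : CompleteSpace K := hK.completeSpace_coe
    ∃ ψ : CtrlRep X ↥K, IsControlledHilbert S ψ ∧ IsLocallyFiniteRep S ψ ∧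
      HasCtrlProp S ψ φ K.subtypeL

end

end

/-!
Write `P_B = φ(χ_B)` and `D_i` for the operators `T` with `P_{Y_i} T P_{Y_i} = T`. Multiplication
by `Q` is continuous, so it suffices to treat `T ∈ D_i`. Quasi-locality provides, for each
`ε > 0`, an entourage `W` such that `‖(1 - P_C) Q P_B‖ ≤ ε` and `‖P_B Q (1 - P_C)‖ ≤ ε` whenever
`W[B] ⊆ C`; as the family is big, `C` can be taken to be some `Y_j ⊇ Y_i`. Then
`P_{Y_j} Q T P_{Y_j}` lies in `D_j` and differs from `Q T` by `(1 - P_{Y_j}) Q P_{Y_i} T`, of norm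
at most `ε ‖T‖`; symmetrically for `T Q`.
-/

section Chi

variable {X : Type*} [TopologicalSpace X] [DiscreteTopology X]

lemma chi_apply (B : Set X) (x : X) : chi B x = B.indicator (fun _ => (1 : ℂ)) x := rfl

lemma chi_mul_chi (B C : Set X) : chi B * chi C = chi (B ∩ C) := by
  ext x
  by_cases hB : x ∈ B <;> by_cases hC : x ∈ C <;> simp [chi_apply, hB, hC]

lemma chi_compl (B : Set X) : chi Bᶜ = 1 - chi B := by
  ext x
  by_cases hB : x ∈ B <;> simp [chi_apply, hB]

variable {H : Type*} [NormedAddCommGroup H] [InnerProductSpace ℂ H] [CompleteSpace H]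
  (φ : CtrlRep X H)

lemma map_chi_mul_map_chi_of_subset {B C : Set X} (h : B ⊆ C) :
    φ (chi B) * φ (chi C) = φ (chi B) := by
  rw [← map_mul, chi_mul_chi, Set.inter_eq_self_of_subset_left h]

lemma map_chi_mul_map_chi_of_subset' {B C : Set X} (h : B ⊆ C) :
    φ (chi C) * φ (chi B) = φ (chi B) := by
  rw [← map_mul, chi_mul_chi, Set.inter_eq_self_of_subset_right h]

lemma isIdempotentElem_map_chi (B : Set X) : IsIdempotentElem (φ (chi B)) :=
  map_chi_mul_map_chi_of_subset φ subset_rfl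

lemma map_chi_compl (B : Set X) : φ (chi Bᶜ) = 1 - φ (chi B) := by
  rw [chi_compl, map_sub, map_one]

end Chi

section Coarse

variable {X : Type*}

lemma iterComp_mem_entourages {S : BornCoarse X} {U : Set (X × X)} (hU : U ∈ S.entourages) :
    ∀ n, iterComp U n ∈ S.entourages
  | 0 => hU
  | n + 1 => S.comp_mem (iterComp_mem_entourages hU n) hU

def IsBigFamily (S : BornCoarse X) {I : Type*} (Y : I → Set X) : Prop :=
  ∀ i, ∀ U ∈ S.entourages, ∃ j, thick U (Y i) ⊆ Y j

lemma thick_inter_thick_compl_eq_empty {V : Set (X × X)} {B C : Set X}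
    (h : thick (relComp {p | (p.2, p.1) ∈ V} V) B ⊆ C) :
    thick V B ∩ thick V Cᶜ = ∅ := by
  refine Set.eq_empty_of_forall_notMem fun x ⟨⟨b, hb, hxb⟩, ⟨c, hc, hxc⟩⟩ => hc ?_
  exact h ⟨b, hb, x, hxc, hxb⟩

end Coarse

section QuasiLocal

variable {X : Type*} [TopologicalSpace X] [DiscreteTopology X] {S : BornCoarse X}
  {H : Type*} [NormedAddCommGroup H] [InnerProductSpace ℂ H] [CompleteSpace H]
  {H' : Type*} [NormedAddCommGroup H'] [InnerProductSpace ℂ H'] [CompleteSpace H']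
  {φ : CtrlRep X H} {φ' : CtrlRep X H'}

lemma IsQuasiLocal.exists_entourage_norm_le {Q : H →L[ℂ] H'} (hQ : IsQuasiLocal S φ φ' Q)
    {ε : ℝ} (hε : 0 < ε) :
    ∃ W ∈ S.entourages, ∀ B C : Set X, thick W B ⊆ C →
      ‖φ' (chi Cᶜ) ∘L Q ∘L φ (chi B)‖ ≤ ε ∧ ‖φ' (chi B) ∘L Q ∘L φ (chi Cᶜ)‖ ≤ ε := by
  obtain ⟨U, hU, hQ⟩ := hQ
  obtain ⟨n, hn⟩ := hQ ε hε
  have hV := iterComp_mem_entourages hU n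
  refine ⟨_, S.comp_mem (S.inv_mem hV) hV, fun B C hBC => ?_⟩
  have hsep := thick_inter_thick_compl_eq_empty hBC
  exact ⟨hn _ _ hsep, hn _ _ (Set.inter_comm _ _ ▸ hsep)⟩

lemma IsQuasiLocal.exists_index_norm_le {Q : H →L[ℂ] H} (hQ : IsQuasiLocal S φ φ Q)
    {I : Type*} {Y : I → Set X} (hY : IsBigFamily S Y) (i : I) {ε : ℝ} (hε : 0 < ε) :
    ∃ j, Y i ⊆ Y j ∧ ‖(1 - φ (chi (Y j))) * Q * φ (chi (Y i))‖ ≤ ε ∧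
      ‖φ (chi (Y i)) * Q * (1 - φ (chi (Y j)))‖ ≤ ε := by
  obtain ⟨W, hW, hWε⟩ := hQ.exists_entourage_norm_le hε
  obtain ⟨j, hj⟩ := hY i _ (S.union_mem hW S.diag_mem)
  have hWY : thick W (Y i) ⊆ Y j := fun x ⟨y, hy, hxy⟩ => hj ⟨y, hy, Or.inl hxy⟩
  refine ⟨j, fun x hx => hj ⟨x, hx, Or.inr rfl⟩, ?_⟩
  obtain ⟨hleft, hright⟩ := hWε _ _ hWY
  rw [map_chi_compl] at hleft hright
  exact ⟨(mul_assoc _ Q _).symm ▸ hleft, (mul_assoc _ Q _).symm ▸ hright⟩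

end QuasiLocal

section Algebra

variable {R : Type*} [Ring R] {p q t : R}

lemma mul_sub_conj_eq (a : R) (hpt : p * t = t) (htq : t * q = t) :
    a * t - q * (a * t) * q = (1 - q) * a * p * t :=
  calc a * t - q * (a * t) * q = (1 - q) * a * t := by
        rw [mul_assoc q, mul_assoc a, htq]; noncomm_ring
    _ = (1 - q) * a * p * t := by rw [mul_assoc _ p, hpt]

lemma sub_conj_mul_eq (a : R) (htp : t * p = t) (hqt : q * t = t) :
    t * a - q * (t * a) * q = t * (p * a * (1 - q)) :=
  calc t * a - q * (t * a) * q = t * a * (1 - q) := by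
        rw [← mul_assoc q, hqt]; noncomm_ring
    _ = t * p * a * (1 - q) := by rw [htp]
    _ = t * (p * a * (1 - q)) := by noncomm_ring

end Algebra

lemma Metric.mem_closure_of_forall_dist_le_mul {α : Type*} [PseudoMetricSpace α] {s : Set α}
    {x : α} (c : ℝ) (h : ∀ ε > 0, ∃ y ∈ s, dist x y ≤ ε * c) : x ∈ closure s := by
  refine (mem_closure_iff_nhds_basis Metric.nhds_basis_closedBall).2 fun δ hδ => ?_
  obtain ⟨y, hy, hxy⟩ := h (δ / (|c| + 1)) (by positivity)
  refine ⟨y, hy, Metric.mem_closedBall'.2 (hxy.trans ?_)⟩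
  rw [div_mul_eq_mul_div, div_le_iff₀ (by positivity)]
  nlinarith [le_abs_self c, abs_nonneg c]

section Supported

variable {X : Type*} [TopologicalSpace X] [DiscreteTopology X]
  {H : Type*} [NormedAddCommGroup H] [InnerProductSpace ℂ H] [CompleteSpace H]
  {φ : CtrlRep X H}

def supportedIn (φ : CtrlRep X H) (B : Set X) : Set (H →L[ℂ] H) :=
  {T | φ (chi B) * T * φ (chi B) = T}

lemma conj_mem_supportedIn (φ : CtrlRep X H) (B : Set X) (Z : H →L[ℂ] H) :
    φ (chi B) * Z * φ (chi B) ∈ supportedIn φ B := by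
  have hP := isIdempotentElem_map_chi φ B
  change _ * _ * _ = _
  rw [← mul_assoc, ← mul_assoc, hP.eq, hP.mul_mul_self]

lemma map_chi_mul_of_mem_supportedIn {B C : Set X} {T : H →L[ℂ] H} (hT : T ∈ supportedIn φ B)
    (hBC : B ⊆ C) : φ (chi C) * T = T := by
  rw [← hT, ← mul_assoc, ← mul_assoc, map_chi_mul_map_chi_of_subset' φ hBC]

lemma mul_map_chi_of_mem_supportedIn {B C : Set X} {T : H →L[ℂ] H} (hT : T ∈ supportedIn φ B)
    (hBC : B ⊆ C) : T * φ (chi C) = T := by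
  rw [← hT, mul_assoc, map_chi_mul_map_chi_of_subset φ hBC]

variable {S : BornCoarse X} {I : Type*} {Y : I → Set X}

lemma IsQuasiLocal.mul_mem_closure_of_mem {Q : H →L[ℂ] H} (hQ : IsQuasiLocal S φ φ Q)
    (hY : IsBigFamily S Y) {T : H →L[ℂ] H} (hT : T ∈ ⋃ i, supportedIn φ (Y i)) :
    Q * T ∈ closure (⋃ i, supportedIn φ (Y i)) ∧
      T * Q ∈ closure (⋃ i, supportedIn φ (Y i)) := by
  obtain ⟨i, hTi⟩ := Set.mem_iUnion.1 hT
  constructor <;> refine Metric.mem_closure_of_forall_dist_le_mul ‖T‖ fun ε hε => ?_ <;>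
    obtain ⟨j, hij, hleft, hright⟩ := hQ.exists_index_norm_le hY i hε
  · refine ⟨_, Set.mem_iUnion_of_mem j (conj_mem_supportedIn φ _ (Q * T)), ?_⟩
    rw [dist_eq_norm, mul_sub_conj_eq Q (map_chi_mul_of_mem_supportedIn hTi subset_rfl)
      (mul_map_chi_of_mem_supportedIn hTi hij)]
    exact (norm_mul_le _ _).trans (mul_le_mul_of_nonneg_right hleft (norm_nonneg T))
  · refine ⟨_, Set.mem_iUnion_of_mem j (conj_mem_supportedIn φ _ (T * Q)), ?_⟩
    rw [dist_eq_norm, sub_conj_mul_eq Q (mul_map_chi_of_mem_supportedIn hTi subset_rfl)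
      (map_chi_mul_of_mem_supportedIn hTi hij), mul_comm ε]
    exact (norm_mul_le _ _).trans (mul_le_mul_of_nonneg_left hright (norm_nonneg T))

end Supported

theorem quasiLocal_mul_mem_closure_nearFamily_general {X : Type*} [TopologicalSpace X]
    [DiscreteTopology X] (S : BornCoarse X)
    {H : Type*} [NormedAddCommGroup H] [InnerProductSpace ℂ H] [CompleteSpace H]
    (φ : CtrlRep X H) {I : Type*} (Y : I → Set X)
    (hbig : ∀ i : I, ∀ U ∈ S.entourages, ∃ j : I, thick U (Y i) ⊆ Y j)
    (Q A : H →L[ℂ] H) (hQ : IsQuasiLocal S φ φ Q)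
    (hA : A ∈ closure (⋃ i : I,
      {T : H →L[ℂ] H | φ (chi (Y i)) * T * φ (chi (Y i)) = T})) :
    Q * A ∈ closure (⋃ i : I,
        {T : H →L[ℂ] H | φ (chi (Y i)) * T * φ (chi (Y i)) = T}) ∧
      A * Q ∈ closure (⋃ i : I,
        {T : H →L[ℂ] H | φ (chi (Y i)) * T * φ (chi (Y i)) = T}) := by
  exact ⟨closure_closure.subset <| map_mem_closure (continuous_const_mul Q) hA
      fun _ hT => (hQ.mul_mem_closure_of_mem hbig hT).1,
    closure_closure.subset <| map_mem_closure (f := (· * Q)) (continuous_mul_const Q) hA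
      fun _ hT => (hQ.mul_mem_closure_of_mem hbig hT).2⟩

/-- Ideal property of operators supported near a big family in the quasi-local Roe algebra:
if `Q` is quasi-local and `A` lies in the norm closure `D` of the operators supported on
some member of the big family `(Y i)`, then `Q * A` and `A * Q` again lie in `D`. -/
theorem quasiLocal_mul_mem_closure_nearFamily {X : Type*} [TopologicalSpace X]
    [DiscreteTopology X] (S : BornCoarse X)
    {H : Type*} [NormedAddCommGroup H] [InnerProductSpace ℂ H] [CompleteSpace H]
    (φ : CtrlRep X H) (hφ : IsControlledHilbert S φ)
    {I : Type*} [PartialOrder I] [Nonempty I] [IsDirected I (· ≤ ·)]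
    (Y : I → Set X) (hmono : Monotone Y)
    (hbig : ∀ i : I, ∀ U ∈ S.entourages, ∃ j : I, thick U (Y i) ⊆ Y j)
    (Q A : H →L[ℂ] H) (hQ : IsQuasiLocal S φ φ Q)
    (hA : A ∈ closure (⋃ i : I,
      {T : H →L[ℂ] H | φ (chi (Y i)) * T * φ (chi (Y i)) = T})) :
    Q * A ∈ closure (⋃ i : I,
        {T : H →L[ℂ] H | φ (chi (Y i)) * T * φ (chi (Y i)) = T}) ∧
      A * Q ∈ closure (⋃ i : I,
        {T : H →L[ℂ] H | φ (chi (Y i)) * T * φ (chi (Y i)) = T}) :=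
  quasiLocal_mul_mem_closure_nearFamily_general S φ Y hbig Q A hQ hA
end

section
/- Pushforward of controlled Hilbert spaces preserves the operator conditions: Let f : X → X' be a morphism of bornological coarse spaces and (H,φ) an X-controlled Hilbert space; let f* : C(X') → C(X) be given by f*(g) := g ∘ f and set φ' := φ ∘ f*. Then (H,φ') is an X'-controlled Hilbert space, and for every bounded operator A on H: (1) if A has controlled propagation with respect to (X,φ) then A has controlled propagation with respect to (X',φ'); (2) if A is quasi-local with respect to (X,φ) then A is quasi-local with respect to (X',φ'); (3) if A is locally compact with respect to (X,φ) then A is locally compact with respect to (X',φ'); and (4) every locally finite subspace of (H,φ) is a locally finite subspace of (H,φ'). -/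
noncomputable section

/-- Precomposition `f* : C(X') → C(X)`, `g ↦ g ∘ f`, as a unital `*`-homomorphism of the
algebras of bounded functions on the discrete spaces `X` and `X'`. -/
def precompSAH {X X' : Type*} [TopologicalSpace X] [DiscreteTopology X]
    [TopologicalSpace X'] [DiscreteTopology X'] (f : X → X') :
    BoundedContinuousFunction X' ℂ →⋆ₐ[ℂ] BoundedContinuousFunction X ℂ where
  toFun g := g.compContinuous ⟨f, continuous_of_discreteTopology⟩
  map_one' := rfl
  map_mul' _ _ := rfl
  map_zero' := rfl
  map_add' _ _ := rfl
  commutes' _ := rfl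
  map_star' _ := rfl

/-- The pushforward `f_* (H, φ) = (H, φ ∘ f*)` of an `X`-controlled Hilbert space along a
map `f : X → X'`. -/
def pushforward {X X' : Type*} [TopologicalSpace X] [DiscreteTopology X]
    [TopologicalSpace X'] [DiscreteTopology X'] (f : X → X')
    {H : Type*} [NormedAddCommGroup H] [InnerProductSpace ℂ H] [CompleteSpace H]
    (φ : CtrlRep X H) : CtrlRep X' H :=
  φ.comp (precompSAH f)

/-!
Since `f*` sends `χ_B` to `χ_{f⁻¹ B}`, the pushed-forward control satisfies
`φ'(χ_B) = φ(χ_{f⁻¹ B})`: every condition on `(H, φ')` at a bounded `B ⊆ X'` is the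
corresponding condition on `(H, φ)` at `f⁻¹ B`, which is bounded because `f` is proper.
An entourage `U` of `X` is replaced by `(f × f)(U)`, an entourage of `X'` because `f` is
controlled; the preimage of a `(f × f)(U)`-thickening of `B` contains the `U`-thickening of
`f⁻¹ B`, so separated sets pull back to separated sets and propagation stays controlled.
-/

section Preimage

variable {X X' : Type*}

lemma thick_preimage_subset {f : X → X'} {V : Set (X × X)} {W : Set (X' × X')}
    (hVW : Set.MapsTo (fun p : X × X => (f p.1, f p.2)) V W) (B : Set X') :
    thick V (f ⁻¹' B) ⊆ f ⁻¹' thick W B := by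
  rintro x ⟨b, hb, hxb⟩
  exact ⟨f b, hb, hVW hxb⟩

lemma mapsTo_iterComp_image (f : X → X') (U : Set (X × X)) (n : ℕ) :
    Set.MapsTo (fun p : X × X => (f p.1, f p.2)) (iterComp U n)
      (iterComp ((fun p : X × X => (f p.1, f p.2)) '' U) n) := by
  induction n with
  | zero => exact Set.mapsTo_image _ U
  | succ n ih =>
    rintro ⟨a, b⟩ ⟨z, haz, hzb⟩
    exact ⟨f z, ih haz, ⟨(z, b), hzb, rfl⟩⟩

lemma thick_preimage_inter_eq_empty {f : X → X'} {V : Set (X × X)} {W : Set (X' × X')}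
    (hVW : Set.MapsTo (fun p : X × X => (f p.1, f p.2)) V W) {B B' : Set X'}
    (hsep : thick W B ∩ thick W B' = ∅) :
    thick V (f ⁻¹' B) ∩ thick V (f ⁻¹' B') = ∅ := by
  rw [← Set.subset_empty_iff, ← Set.preimage_empty, ← hsep, Set.preimage_inter]
  exact Set.inter_subset_inter (thick_preimage_subset hVW B) (thick_preimage_subset hVW B')

end Preimage

section Pushforward

variable {X X' : Type*} [TopologicalSpace X] [DiscreteTopology X]
  [TopologicalSpace X'] [DiscreteTopology X']
variable {H : Type*} [NormedAddCommGroup H] [InnerProductSpace ℂ H] [CompleteSpace H]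
variable {H' : Type*} [NormedAddCommGroup H'] [InnerProductSpace ℂ H'] [CompleteSpace H']

lemma precompSAH_chi (f : X → X') (B : Set X') :
    precompSAH f (chi B) = chi (f ⁻¹' B) := by
  ext x
  change chi B (f x) = chi (f ⁻¹' B) x
  by_cases hx : f x ∈ B <;> simp [chi, hx]

lemma pushforward_chi (f : X → X') (φ : CtrlRep X H) (B : Set X') :
    pushforward f φ (chi B) = φ (chi (f ⁻¹' B)) := by
  simp [pushforward, precompSAH_chi]

lemma chi_mul_chi_of_subset {B C : Set X} (h : C ⊆ B) : chi B * chi C = chi C := by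
  ext x
  by_cases hx : x ∈ C
  · simp [chi, hx, h hx]
  · simp [chi, hx]

lemma Hsub_mono (φ : CtrlRep X H) {B C : Set X} (h : C ⊆ B) : Hsub φ C ⊆ Hsub φ B := by
  rintro _ ⟨v, rfl⟩
  refine ⟨φ (chi C) v, ?_⟩
  change (φ (chi B) * φ (chi C)) v = _
  rw [← map_mul, chi_mul_chi_of_subset h]

lemma Hsub_pushforward (f : X → X') (φ : CtrlRep X H) (B : Set X') :
    Hsub (pushforward f φ) B = Hsub φ (f ⁻¹' B) := by
  rw [Hsub, Hsub, pushforward_chi]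

variable {S : BornCoarse X} {S' : BornCoarse X'} {f : X → X'}

lemma isControlledHilbert_pushforward (hf : IsProper S S' f) {φ : CtrlRep X H}
    (hφ : IsControlledHilbert S φ) : IsControlledHilbert S' (pushforward f φ) := by
  intro B hB
  rw [Hsub_pushforward]
  exact hφ _ (hf B hB)

lemma hasCtrlProp_pushforward (hf : IsMorphism S S' f) {φ : CtrlRep X H}
    {φ' : CtrlRep X H'} {A : H →L[ℂ] H'} (hA : HasCtrlProp S φ φ' A) :
    HasCtrlProp S' (pushforward f φ) (pushforward f φ') A := by
  obtain ⟨U, hU, hprop⟩ := hA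
  refine ⟨_, hf.1 U hU, fun B hB => ?_⟩
  rw [Hsub_pushforward, Hsub_pushforward]
  exact (hprop _ (hf.2 B hB)).trans
    (Hsub_mono φ' (thick_preimage_subset (Set.mapsTo_image _ U) B))

lemma isQuasiLocal_pushforward (hf : IsControlled S S' f) {φ : CtrlRep X H}
    {φ' : CtrlRep X H'} {A : H →L[ℂ] H'} (hA : IsQuasiLocal S φ φ' A) :
    IsQuasiLocal S' (pushforward f φ) (pushforward f φ') A := by
  obtain ⟨U, hU, hql⟩ := hA
  refine ⟨_, hf U hU, fun ε hε => ?_⟩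
  obtain ⟨n, hn⟩ := hql ε hε
  refine ⟨n, fun B B' hsep => ?_⟩
  rw [pushforward_chi, pushforward_chi]
  exact hn _ _ (thick_preimage_inter_eq_empty (mapsTo_iterComp_image f U n) hsep)

lemma isLocallyCompactOp_pushforward (hf : IsProper S S' f) {φ : CtrlRep X H}
    {A : H →L[ℂ] H} (hA : IsLocallyCompactOp S φ A) :
    IsLocallyCompactOp S' (pushforward f φ) A := by
  intro B hB
  rw [pushforward_chi]
  exact hA _ (hf B hB)

lemma isLocallyFiniteRep_pushforward (hf : IsProper S S' f) {φ : CtrlRep X H}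
    (hφ : IsLocallyFiniteRep S φ) : IsLocallyFiniteRep S' (pushforward f φ) := by
  intro B hB
  rw [pushforward_chi]
  exact hφ _ (hf B hB)

lemma isLocFinSubspace_pushforward (hf : IsMorphism S S' f) {φ : CtrlRep X H}
    {K : Submodule ℂ H} (hK : IsLocFinSubspace S φ K) :
    IsLocFinSubspace S' (pushforward f φ) K := by
  obtain ⟨hclosed, ψ, hψ, hψfin, hincl⟩ := hK
  have : CompleteSpace K := hclosed.completeSpace_coe
  exact ⟨hclosed, pushforward f ψ, isControlledHilbert_pushforward hf.2 hψ,
    isLocallyFiniteRep_pushforward hf.2 hψfin, hasCtrlProp_pushforward hf hincl⟩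

end Pushforward

/-- Pushforward of controlled Hilbert spaces along a morphism preserves the operator
conditions: `(H, φ ∘ f*)` is an `X'`-controlled Hilbert space, and controlled propagation,
quasi-locality, local compactness of operators and local finiteness of subspaces are
preserved. -/
theorem pushforward_controlledHilbert {X X' : Type*} [TopologicalSpace X]
    [DiscreteTopology X] [TopologicalSpace X'] [DiscreteTopology X']
    (S : BornCoarse X) (S' : BornCoarse X') (f : X → X') (hf : IsMorphism S S' f)
    {H : Type*} [NormedAddCommGroup H] [InnerProductSpace ℂ H] [CompleteSpace H]
    (φ : CtrlRep X H) (hφ : IsControlledHilbert S φ) :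
    IsControlledHilbert S' (pushforward f φ) ∧
    (∀ A : H →L[ℂ] H, HasCtrlProp S φ φ A →
      HasCtrlProp S' (pushforward f φ) (pushforward f φ) A) ∧
    (∀ A : H →L[ℂ] H, IsQuasiLocal S φ φ A →
      IsQuasiLocal S' (pushforward f φ) (pushforward f φ) A) ∧
    (∀ A : H →L[ℂ] H, IsLocallyCompactOp S φ A →
      IsLocallyCompactOp S' (pushforward f φ) A) ∧
    ∀ K : Submodule ℂ H, IsLocFinSubspace S φ K →
      IsLocFinSubspace S' (pushforward f φ) K :=
  ⟨isControlledHilbert_pushforward hf.2 hφ,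
    fun _ => hasCtrlProp_pushforward hf,
    fun _ => isQuasiLocal_pushforward hf.1,
    fun _ => isLocallyCompactOp_pushforward hf.2,
    fun _ => isLocFinSubspace_pushforward hf⟩
end
end
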